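/- arXiv:1303.4575 — 3 statements merged into one kernel-verified Lean document; each statement's English description precedes it below -/
import Mathlib

section
/- Let (γ, ℓ, ℓ⁽²⁾) be coordinate hypersurface metric data on U with inverse blocks (P, n, n⁽²⁾), and let Y = (Y_{ab}) be an arbitrary smooth symmetric field. Define Γ̄^c_{ab} := ½P^{cd}(∂_aγ_{bd} + ∂_bγ_{ad} − ∂_dγ_{ab}) + n^c(−Y_{ab} + ½(∂_aℓ_b + ∂_bℓ_a)); K_{ab} := n⁽²⁾Y_{ab} + ½(n^c∂_cγ_{ab} + γ_{cb}∂_an^c + γ_{ac}∂_bn^c) + ½(ℓ_a∂_bn⁽²⁾ + ℓ_b∂_an⁽²⁾); φ_a := ½n⁽²⁾∂_aℓ⁽²⁾ + n^b(Y_{ab} + F_{ab}); Ψ^b_a := P^{bc}(Y_{ac} + F_{ac}) + ½n^b∂_aℓ⁽²⁾. Then Γ̄^c_{ab} = Γ̄^c_{ba}, K_{ab} = K_{ba}, the three compatibility equations ∇̄_aγ_{bc} + ℓ_bK_{ac} + ℓ_cK_{ab} = 0, ∇̄_aℓ_b − φ_aℓ_b + ℓ⁽²⁾K_{ab} − γ_{bc}Ψ^c_a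 = 0, and −½∂_aℓ⁽²⁾ + Ψ^b_aℓ_b + ℓ⁽²⁾φ_a = 0 hold, and moreover Y_{ab} = ½(∇̄_aℓ_b + ∇̄_bℓ_a) + ℓ⁽²⁾K_{ab}. Conversely, if smooth fields Γ̄^c_{ab} (symmetric in a,b), K_{ab} (symmetric), φ_a and Ψ^b_a satisfy the three compatibility equations, then they are given by the above four formulas with Y_{ab} := ½(∇̄_aℓ_b + ∇̄_bℓ_a) + ℓ⁽²⁾K_{ab}. -/
open scoped BigOperators

noncomputable section

namespace HypData

variable {m : ℕ}

/-- Scalar field on ℝ^m. -/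
abbrev Sc (m : ℕ) := (Fin m → ℝ) → ℝ
/-- One-index field. -/
abbrev Vec (m : ℕ) := (Fin m → ℝ) → Fin m → ℝ
/-- Two-index field. -/
abbrev Ten (m : ℕ) := (Fin m → ℝ) → Fin m → Fin m → ℝ
/-- Connection coefficients `Γ x c a b = Γ^c_{ab}` (first index upper). -/
abbrev Conn (m : ℕ) := (Fin m → ℝ) → Fin m → Fin m → Fin m → ℝ
/-- Three-index field. -/
abbrev Ten3 (m : ℕ) := (Fin m → ℝ) → Fin m → Fin m → Fin m → ℝ

/-- Partial derivative of `f` in the `a`-th coordinate direction at `x`. -/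
def pd (a : Fin m) (f : Sc m) (x : Fin m → ℝ) : ℝ :=
  fderiv ℝ f x (Pi.single a 1)

/-- Kronecker delta. -/
def kd (a b : Fin m) : ℝ := if a = b then 1 else 0

/-- Equations (EqP1)-(EqP4): `[[P,n],[nᵀ,n2]]` consists of the inverse blocks of
the block matrix `[[γ,ℓ],[ℓᵀ,ℓ2]]`. -/
def InvBlocks (γ : Fin m → Fin m → ℝ) (ℓ : Fin m → ℝ) (ℓ2 : ℝ)
    (P : Fin m → Fin m → ℝ) (n : Fin m → ℝ) (n2 : ℝ) : Prop :=
  (∀ a b, (∑ c, P a c * γ c b) + n a * ℓ b = kd a b) ∧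
  (∀ a, (∑ b, P a b * ℓ b) + ℓ2 * n a = 0) ∧
  ((∑ a, n a * ℓ a) + n2 * ℓ2 = 1) ∧
  (∀ a, (∑ b, γ a b * n b) + n2 * ℓ a = 0)

/-- ∇_a ω_b. -/
def covD1 (Γ : Conn m) (ω : Vec m) (x : Fin m → ℝ) (a b : Fin m) : ℝ :=
  pd a (fun y => ω y b) x - ∑ d, Γ x d a b * ω x d

/-- ∇_a X^b. -/
def covD1U (Γ : Conn m) (X : Vec m) (x : Fin m → ℝ) (a b : Fin m) : ℝ :=
  pd a (fun y => X y b) x + ∑ d, Γ x b a d * X x d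

/-- ∇_a T_{bc}. -/
def covD2 (Γ : Conn m) (T : Ten m) (x : Fin m → ℝ) (a b c : Fin m) : ℝ :=
  pd a (fun y => T y b c) x - (∑ d, Γ x d a b * T x d c) - (∑ d, Γ x d a c * T x b d)

/-- ∇_a T^{bc}. -/
def covD2U (Γ : Conn m) (T : Ten m) (x : Fin m → ℝ) (a b c : Fin m) : ℝ :=
  pd a (fun y => T y b c) x + (∑ d, Γ x b a d * T x d c) + (∑ d, Γ x c a d * T x b d)

/-- ∇_a S^b_c (first index of `S` upper, second lower). -/
def covD11 (Γ : Conn m) (S : Ten m) (x : Fin m → ℝ) (a b c : Fin m) : ℝ :=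
  pd a (fun y => S y b c) x + (∑ d, Γ x b a d * S x d c) - (∑ d, Γ x d a c * S x b d)

/-- ∇_a Q^{bcd}. -/
def covD3U (Γ : Conn m) (Q : Ten3 m) (x : Fin m → ℝ) (a b c d : Fin m) : ℝ :=
  pd a (fun y => Q y b c d) x + (∑ f, Γ x b a f * Q x f c d)
    + (∑ f, Γ x c a f * Q x b f d) + (∑ f, Γ x d a f * Q x b c f)

/-- Curvature `R^a_{bcd} = ∂_cΓ^a_{db} − ∂_dΓ^a_{cb} + Γ^a_{cf}Γ^f_{db} − Γ^a_{df}Γ^f_{cb}`. -/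
def curv (Γ : Conn m) (x : Fin m → ℝ) (a b c d : Fin m) : ℝ :=
  pd c (fun y => Γ y a d b) x - pd d (fun y => Γ y a c b) x
    + (∑ f, Γ x a c f * Γ x f d b) - (∑ f, Γ x a d f * Γ x f c b)

/-- `F_{ab} = ½(∂_aℓ_b − ∂_bℓ_a)`. -/
def Ff (ℓ : Vec m) (x : Fin m → ℝ) (a b : Fin m) : ℝ :=
  (pd a (fun y => ℓ y b) x - pd b (fun y => ℓ y a) x) / 2

/-- `U_{ab} = ½(n^c∂_cγ_{ab} + γ_{cb}∂_an^c + γ_{ac}∂_bn^c + ℓ_a∂_bn⁽²⁾ + ℓ_b∂_an⁽²⁾)`. -/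
def Uf (γ : Ten m) (ℓ : Vec m) (n : Vec m) (n2 : Sc m)
    (x : Fin m → ℝ) (a b : Fin m) : ℝ :=
  ((∑ c, (n x c * pd c (fun y => γ y a b) x + γ x c b * pd a (fun y => n y c) x
      + γ x a c * pd b (fun y => n y c) x))
    + ℓ x a * pd b n2 x + ℓ x b * pd a n2 x) / 2

/-- Metric hypersurface connection `Γ̊^c_{ab}`. -/
def Gam0 (γ : Ten m) (ℓ : Vec m) (P : Ten m) (n : Vec m)
    (x : Fin m → ℝ) (c a b : Fin m) : ℝ :=
  (∑ d, P x c d * (pd a (fun y => γ y b d) x + pd b (fun y => γ y a d) x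
      - pd d (fun y => γ y a b) x)) / 2
  + n x c * (pd a (fun y => ℓ y b) x + pd b (fun y => ℓ y a) x) / 2

/-- The connection `Γ̄^c_{ab} = Γ̊^c_{ab} − n^c Y_{ab}`. -/
def GamB (γ : Ten m) (ℓ : Vec m) (P : Ten m) (n : Vec m) (Y : Ten m)
    (x : Fin m → ℝ) (c a b : Fin m) : ℝ :=
  Gam0 γ ℓ P n x c a b - n x c * Y x a b

/-- `K_{ab} = n⁽²⁾Y_{ab} + U_{ab}`. -/
def Kf (γ : Ten m) (ℓ : Vec m) (n : Vec m) (n2 : Sc m) (Y : Ten m)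
    (x : Fin m → ℝ) (a b : Fin m) : ℝ :=
  n2 x * Y x a b + Uf γ ℓ n n2 x a b

/-- `φ_a = ½n⁽²⁾∂_aℓ⁽²⁾ + n^b(Y_{ab} + F_{ab})`. -/
def phif (ℓ : Vec m) (ℓ2 : Sc m) (n : Vec m) (n2 : Sc m) (Y : Ten m)
    (x : Fin m → ℝ) (a : Fin m) : ℝ :=
  n2 x * pd a ℓ2 x / 2 + ∑ b, n x b * (Y x a b + Ff ℓ x a b)

/-- `Ψ^b_a = P^{bc}(Y_{ac} + F_{ac}) + ½n^b∂_aℓ⁽²⁾`. -/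
def Psif (ℓ : Vec m) (ℓ2 : Sc m) (P : Ten m) (n : Vec m) (Y : Ten m)
    (x : Fin m → ℝ) (b a : Fin m) : ℝ :=
  (∑ c, P x b c * (Y x a c + Ff ℓ x a c)) + n x b * pd a ℓ2 x / 2

/-- Smoothness of a scalar field on `U`. -/
def SmSc (U : Set (Fin m → ℝ)) (f : Sc m) : Prop := ContDiffOn ℝ (⊤ : ℕ∞) f U
/-- Smoothness of a one-index field on `U`. -/
def SmVec (U : Set (Fin m → ℝ)) (f : Vec m) : Prop :=
  ∀ a, ContDiffOn ℝ (⊤ : ℕ∞) (fun x => f x a) U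
/-- Smoothness of a two-index field on `U`. -/
def SmTen (U : Set (Fin m → ℝ)) (f : Ten m) : Prop :=
  ∀ a b, ContDiffOn ℝ (⊤ : ℕ∞) (fun x => f x a b) U

/-- Smooth coordinate hypersurface metric data on `U`. -/
def MetricData (U : Set (Fin m → ℝ)) (γ : Ten m) (ℓ : Vec m) (ℓ2 : Sc m)
    (P : Ten m) (n : Vec m) (n2 : Sc m) : Prop :=
  SmTen U γ ∧ SmVec U ℓ ∧ SmSc U ℓ2 ∧ SmTen U P ∧ SmVec U n ∧ SmSc U n2 ∧
  (∀ x ∈ U, ∀ a b, γ x a b = γ x b a) ∧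
  (∀ x ∈ U, ∀ a b, P x a b = P x b a) ∧
  (∀ x ∈ U, InvBlocks (γ x) (ℓ x) (ℓ2 x) (P x) (n x) (n2 x))

/-- Gauge-transformed `ℓ`. -/
def gaugeL (γ : Ten m) (ℓ : Vec m) (u : Sc m) (V : Vec m) : Vec m :=
  fun x a => u x * (ℓ x a + ∑ b, V x b * γ x a b)

/-- Gauge-transformed `ℓ⁽²⁾`. -/
def gaugeL2 (γ : Ten m) (ℓ : Vec m) (ℓ2 : Sc m) (u : Sc m) (V : Vec m) : Sc m :=
  fun x => u x ^ 2 * (ℓ2 x + 2 * (∑ a, V x a * ℓ x a) + ∑ a, ∑ b, V x a * V x b * γ x a b)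

/-- Gauge-transformed `Y`. -/
def gaugeY (γ : Ten m) (ℓ : Vec m) (Y : Ten m) (u : Sc m) (V : Vec m) : Ten m :=
  fun x a b => u x * Y x a b + (ℓ x a * pd b u x + ℓ x b * pd a u x) / 2
    + ((u x * ∑ c, V x c * pd c (fun y => γ y a b) x)
      + (∑ c, γ x c b * pd a (fun y => u y * V y c) x)
      + (∑ c, γ x a c * pd b (fun y => u y * V y c) x)) / 2

/-- Gauge-transformed `P`. -/
def gaugeP (P : Ten m) (n : Vec m) (n2 : Sc m) (V : Vec m) : Ten m :=
  fun x a b => P x a b + n2 x * V x a * V x b - V x a * n x b - V x b * n x a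

/-- Gauge-transformed `n`. -/
def gaugeN (n : Vec m) (n2 : Sc m) (u : Sc m) (V : Vec m) : Vec m :=
  fun x a => (u x)⁻¹ * (n x a - n2 x * V x a)

/-- Gauge-transformed `n⁽²⁾`. -/
def gaugeN2 (n2 : Sc m) (u : Sc m) : Sc m :=
  fun x => ((u x) ^ 2)⁻¹ * n2 x

/-- Shell energy-momentum tensor `τ^{fa}` built pointwise from the jump `V_{ab}`. -/
def tauP (P : Fin m → Fin m → ℝ) (n : Fin m → ℝ) (n2 : ℝ) (V : Fin m → Fin m → ℝ)
    (f a : Fin m) : ℝ :=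
  (∑ c, ∑ d, (n f * P a c + n a * P f c) * n d * V c d)
  - (∑ c, ∑ d, (n2 * P f c * P a d + P f a * n c * n d) * V c d)
  + (n2 * P f a - n f * n a) * (∑ c, ∑ d, P c d * V c d)

/-- `τ^f_c = −(n⁽²⁾P^{bd} − n^bn^d)(δ^f_dV_{bc} − δ^f_cV_{bd})`. -/
def tauMixP (P : Fin m → Fin m → ℝ) (n : Fin m → ℝ) (n2 : ℝ)
    (V : Fin m → Fin m → ℝ) (f c : Fin m) : ℝ :=
  -(∑ b, ∑ d, (n2 * P b d - n b * n d) * (kd f d * V b c - kd f c * V b d))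

/-- `T^f = (P^{bf}n^c − P^{bc}n^f)V_{bc}`. -/
def tauVecP (P : Fin m → Fin m → ℝ) (n : Fin m → ℝ) (V : Fin m → Fin m → ℝ)
    (f : Fin m) : ℝ :=
  ∑ b, ∑ c, (P b f * n c - P b c * n f) * V b c

/-- The block matrix 𝔸. -/
def blockA (γ : Ten m) (ℓ : Vec m) (ℓ2 : Sc m) (x : Fin m → ℝ) :
    Matrix (Fin m ⊕ Unit) (Fin m ⊕ Unit) ℝ :=
  fun i j =>
    match i, j with
    | Sum.inl a, Sum.inl b => γ x a b
    | Sum.inl a, Sum.inr _ => ℓ x a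
    | Sum.inr _, Sum.inl b => ℓ x b
    | Sum.inr _, Sum.inr _ => ℓ2 x

/-- `det 𝔸` as a scalar field. -/
def detA (γ : Ten m) (ℓ : Vec m) (ℓ2 : Sc m) (x : Fin m → ℝ) : ℝ :=
  (blockA γ ℓ ℓ2 x).det

end HypData

/-!
Everything reduces to pointwise linear algebra, the only calculus input being the derivative
of `γ_{cb} n^b + n⁽²⁾ ℓ_c = 0`. The connection has the form `Γ̄^c_{ab} = P^{cd} w_d + n^c s` with
`w_d` the Christoffel symbols of the first kind of `γ` and `s = ½(∂_aℓ_b + ∂_bℓ_a) − Y_{ab}`, so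
`𝔸 𝔸⁻¹ = 1` gives `Γ̄^d_{ab} γ_{dc} = w_c − ℓ_c r` and `Γ̄^d_{ab} ℓ_d = s − ℓ⁽²⁾ r` with
`r = n^d w_d + n⁽²⁾ s`, and the derivative identity says exactly `r = −K_{ab}`. Likewise
`Ψ^·_a = P (Y + F)_{a·} + n ½∂_aℓ⁽²⁾` has `r = φ_a`. The compatibility equations follow.

Conversely, the first compatibility equation determines `Γ^d_{ab} γ_{dc}` by the Koszul formula,
the definition of `Y` determines `Γ^d_{ab} ℓ_d`, and the other two determine `γ Ψ + ℓ φ` and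
`ℓ Ψ + ℓ⁽²⁾ φ`; applying `𝔸⁻¹ 𝔸 = 1` to `(Γ^·_{ab}, −K_{ab})` and `(Ψ^·_a, φ_a)` recovers
`Γ, K, Ψ, φ`.
-/

namespace HypData

variable {m : ℕ}

theorem sum_mul_sum_mul_comm (A : Fin m → ℝ) (B : Fin m → Fin m → ℝ) (v : Fin m → ℝ) :
    ∑ d, A d * ∑ e, B d e * v e = ∑ e, (∑ d, A d * B d e) * v e :=
  Matrix.dotProduct_mulVec A B v

theorem sum_kd_mul (c : Fin m) (v : Fin m → ℝ) : ∑ e, kd c e * v e = v c := by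
  simp [kd]

namespace InvBlocks

variable {γ P : Fin m → Fin m → ℝ} {ℓ n : Fin m → ℝ} {ℓ2 n2 : ℝ}

-- `𝔸⁻¹ 𝔸 = 1`, applied to the column `(v, t)`.
theorem P_mul_add (h : InvBlocks γ ℓ ℓ2 P n n2) (v : Fin m → ℝ) (t : ℝ) (c : Fin m) :
    ∑ d, P c d * (∑ e, γ d e * v e + ℓ d * t) + n c * (∑ e, v e * ℓ e + ℓ2 * t) = v c := by
  obtain ⟨h1, h2, -, -⟩ := h
  have hPγ : ∑ d, P c d * ∑ e, γ d e * v e = v c - n c * ∑ e, v e * ℓ e := calc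
    _ = ∑ e, (kd c e - n c * ℓ e) * v e := by
      simp only [sum_mul_sum_mul_comm, fun e => eq_sub_of_add_eq (h1 c e)]
    _ = _ := by
      simp only [sub_mul, Finset.sum_sub_distrib, sum_kd_mul, Finset.mul_sum]
      congr 1; exact Finset.sum_congr rfl fun e _ => by ring
  have hPℓ : ∑ d, P c d * ℓ d = -(ℓ2 * n c) := eq_neg_of_add_eq_zero_left (h2 c)
  simp only [mul_add, Finset.sum_add_distrib, hPγ, ← mul_assoc, ← Finset.sum_mul, hPℓ]
  ring

theorem n_mul_add (h : InvBlocks γ ℓ ℓ2 P n n2) (hγ : ∀ a b, γ a b = γ b a)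
    (v : Fin m → ℝ) (t : ℝ) :
    ∑ d, n d * (∑ e, γ d e * v e + ℓ d * t) + n2 * (∑ e, v e * ℓ e + ℓ2 * t) = t := by
  obtain ⟨-, -, h3, h4⟩ := h
  have hnγ : ∑ d, n d * ∑ e, γ d e * v e = -(n2 * ∑ e, v e * ℓ e) := calc
    _ = ∑ e, -(n2 * ℓ e) * v e := by
      refine (sum_mul_sum_mul_comm _ _ _).trans (Finset.sum_congr rfl fun e _ => ?_)
      rw [← eq_neg_of_add_eq_zero_left (h4 e)]
      exact congrArg (· * v e) (Finset.sum_congr rfl fun d _ => by rw [hγ]; ring)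
    _ = _ := by
      simp only [Finset.mul_sum, ← Finset.sum_neg_distrib]
      exact Finset.sum_congr rfl fun e _ => by ring
  simp only [mul_add, Finset.sum_add_distrib, hnγ, ← mul_assoc, ← Finset.sum_mul]
  linear_combination t * h3

-- `𝔸 𝔸⁻¹ = 1`, applied to the column `(w, s)`.
theorem gamma_mul_add (h : InvBlocks γ ℓ ℓ2 P n n2) (hγ : ∀ a b, γ a b = γ b a)
    (hP : ∀ a b, P a b = P b a) (w : Fin m → ℝ) (s : ℝ) (d : Fin m) :
    ∑ e, γ d e * (∑ f, P e f * w f + n e * s) + ℓ d * (∑ f, n f * w f + n2 * s) = w d := by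
  obtain ⟨h1, -, -, h4⟩ := h
  have hγP : ∑ e, γ d e * ∑ f, P e f * w f = w d - ℓ d * ∑ f, n f * w f := calc
    _ = ∑ f, (kd f d - n f * ℓ d) * w f := by
      refine (sum_mul_sum_mul_comm _ _ _).trans (Finset.sum_congr rfl fun f _ => ?_)
      rw [← eq_sub_of_add_eq (h1 f d)]
      exact congrArg (· * w f) (Finset.sum_congr rfl fun e _ => by rw [hγ, hP]; ring)
    _ = _ := by
      simp only [sub_mul, Finset.sum_sub_distrib, Finset.mul_sum]
      congr 1
      · simp [kd, eq_comm]
      · exact Finset.sum_congr rfl fun e _ => by ring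
  have hγn : ∑ e, γ d e * n e = -(n2 * ℓ d) := eq_neg_of_add_eq_zero_left (h4 d)
  simp only [mul_add, Finset.sum_add_distrib, hγP, ← mul_assoc, ← Finset.sum_mul, hγn]
  ring

theorem mul_ell_add (h : InvBlocks γ ℓ ℓ2 P n n2) (hP : ∀ a b, P a b = P b a)
    (w : Fin m → ℝ) (s : ℝ) :
    ∑ e, (∑ f, P e f * w f + n e * s) * ℓ e + ℓ2 * (∑ f, n f * w f + n2 * s) = s := by
  obtain ⟨-, h2, h3, -⟩ := h
  have hPℓ : ∑ e, ℓ e * ∑ f, P e f * w f = -(ℓ2 * ∑ f, n f * w f) := calc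
    _ = ∑ f, -(ℓ2 * n f) * w f := by
      refine (sum_mul_sum_mul_comm _ _ _).trans (Finset.sum_congr rfl fun f _ => ?_)
      rw [← eq_neg_of_add_eq_zero_left (h2 f)]
      exact congrArg (· * w f) (Finset.sum_congr rfl fun e _ => by rw [hP]; ring)
    _ = _ := by
      simp only [Finset.mul_sum, ← Finset.sum_neg_distrib]
      exact Finset.sum_congr rfl fun e _ => by ring
  simp only [add_mul, Finset.sum_add_distrib, fun e => mul_comm (∑ f, P e f * w f) (ℓ e), hPℓ]
  simp only [mul_right_comm _ s, ← Finset.sum_mul]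
  linear_combination s * h3

end InvBlocks

def symDeriv (ω : Vec m) (x : Fin m → ℝ) (a b : Fin m) : ℝ :=
  (pd a (fun y => ω y b) x + pd b (fun y => ω y a) x) / 2

def christoffel1 (γ : Ten m) (x : Fin m → ℝ) (c a b : Fin m) : ℝ :=
  (pd a (fun y => γ y b c) x + pd b (fun y => γ y a c) x - pd c (fun y => γ y a b) x) / 2

section Pointwise

variable {γ P Y K Ψ : Ten m} {ℓ n φ : Vec m} {ℓ2 n2 : Sc m} {Γ : Conn m} {x : Fin m → ℝ}

theorem christoffel1_add_christoffel1
    (hdγ : ∀ a b c, pd a (fun y => γ y b c) x = pd a (fun y => γ y c b) x) (a b c : Fin m) :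
    christoffel1 γ x c a b + christoffel1 γ x b a c = pd a (fun y => γ y b c) x := by
  unfold christoffel1
  linear_combination (-1 / 2 : ℝ) * hdγ a b c

theorem GamB_eq (c a b : Fin m) :
    GamB γ ℓ P n Y x c a b = ∑ d, P x c d * christoffel1 γ x d a b
      + n x c * (symDeriv ℓ x a b - Y x a b) := by
  simp only [GamB, Gam0, christoffel1, symDeriv, mul_div_assoc', ← Finset.sum_div]
  ring

theorem GamB_comm (hdγ : ∀ a b c, pd a (fun y => γ y b c) x = pd a (fun y => γ y c b) x)
    (hY : ∀ a b, Y x a b = Y x b a) (c a b : Fin m) :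
    GamB γ ℓ P n Y x c a b = GamB γ ℓ P n Y x c b a := by
  have hsum : ∀ d, christoffel1 γ x d a b = christoffel1 γ x d b a := fun d => by
    unfold christoffel1; rw [hdγ d a b]; ring
  simp only [GamB_eq, hsum, hY a b, symDeriv]
  ring

theorem Kf_comm (hγ : ∀ a b, γ x a b = γ x b a)
    (hdγ : ∀ a b c, pd a (fun y => γ y b c) x = pd a (fun y => γ y c b) x)
    (hY : ∀ a b, Y x a b = Y x b a) (a b : Fin m) :
    Kf γ ℓ n n2 Y x a b = Kf γ ℓ n n2 Y x b a := by
  have hsum : ∀ c, n x c * pd c (fun y => γ y a b) x + γ x c b * pd a (fun y => n y c) x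
      + γ x a c * pd b (fun y => n y c) x = n x c * pd c (fun y => γ y b a) x
      + γ x c a * pd b (fun y => n y c) x + γ x b c * pd a (fun y => n y c) x := fun c => by
    rw [hdγ c a b, hγ c b, hγ a c]; ring
  simp only [Kf, Uf, hsum, hY a b]
  ring

theorem Kf_eq (hγ : ∀ a b, γ x a b = γ x b a)
    (hD : ∀ a c, ∑ b, (pd a (fun y => γ y c b) x * n x b + γ x c b * pd a (fun y => n y b) x)
      + pd a n2 x * ℓ x c + n2 x * pd a (fun y => ℓ y c) x = 0) (a b : Fin m) :
    Kf γ ℓ n n2 Y x a b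
      = -(∑ d, n x d * christoffel1 γ x d a b + n2 x * (symDeriv ℓ x a b - Y x a b)) := by
  have hsum : ∑ c, (n x c * pd c (fun y => γ y a b) x + γ x c b * pd a (fun y => n y c) x
        + γ x a c * pd b (fun y => n y c) x) + 2 * ∑ d, n x d * christoffel1 γ x d a b
      = ∑ d, (pd a (fun y => γ y b d) x * n x d + γ x b d * pd a (fun y => n y d) x)
        + ∑ d, (pd b (fun y => γ y a d) x * n x d + γ x a d * pd b (fun y => n y d) x) := by
    rw [Finset.mul_sum, ← Finset.sum_add_distrib, ← Finset.sum_add_distrib]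
    exact Finset.sum_congr rfl fun d _ => by rw [christoffel1, hγ d b]; ring
  unfold Kf Uf symDeriv
  linear_combination (1 / 2 : ℝ) * (hD a b + hD b a + hsum)

theorem sum_GamB_mul_gamma (hinv : InvBlocks (γ x) (ℓ x) (ℓ2 x) (P x) (n x) (n2 x))
    (hγ : ∀ a b, γ x a b = γ x b a) (hP : ∀ a b, P x a b = P x b a)
    (hD : ∀ a c, ∑ b, (pd a (fun y => γ y c b) x * n x b + γ x c b * pd a (fun y => n y b) x)
      + pd a n2 x * ℓ x c + n2 x * pd a (fun y => ℓ y c) x = 0) (a b c : Fin m) :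
    ∑ d, GamB γ ℓ P n Y x d a b * γ x d c
      = christoffel1 γ x c a b + ℓ x c * Kf γ ℓ n n2 Y x a b := by
  have h := hinv.gamma_mul_add hγ hP (fun d => christoffel1 γ x d a b)
    (symDeriv ℓ x a b - Y x a b) c
  calc ∑ d, GamB γ ℓ P n Y x d a b * γ x d c
      = ∑ d, γ x c d * (∑ f, P x d f * christoffel1 γ x f a b
          + n x d * (symDeriv ℓ x a b - Y x a b)) :=
        Finset.sum_congr rfl fun d _ => by rw [GamB_eq, hγ, mul_comm]
    _ = _ := by rw [Kf_eq hγ hD]; linear_combination h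

theorem covD1_GamB (hinv : InvBlocks (γ x) (ℓ x) (ℓ2 x) (P x) (n x) (n2 x))
    (hγ : ∀ a b, γ x a b = γ x b a) (hP : ∀ a b, P x a b = P x b a)
    (hD : ∀ a c, ∑ b, (pd a (fun y => γ y c b) x * n x b + γ x c b * pd a (fun y => n y b) x)
      + pd a n2 x * ℓ x c + n2 x * pd a (fun y => ℓ y c) x = 0) (a b : Fin m) :
    covD1 (GamB γ ℓ P n Y) ℓ x a b = Y x a b + Ff ℓ x a b - ℓ2 x * Kf γ ℓ n n2 Y x a b := by
  have h := hinv.mul_ell_add hP (fun d => christoffel1 γ x d a b) (symDeriv ℓ x a b - Y x a b)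
  simp only [covD1, GamB_eq, Kf_eq hγ hD, Ff, symDeriv] at h ⊢
  linear_combination -h

theorem sum_gamma_mul_Psif (hinv : InvBlocks (γ x) (ℓ x) (ℓ2 x) (P x) (n x) (n2 x))
    (hγ : ∀ a b, γ x a b = γ x b a) (hP : ∀ a b, P x a b = P x b a) (a b : Fin m) :
    ∑ c, γ x b c * Psif ℓ ℓ2 P n Y x c a = Y x a b + Ff ℓ x a b - phif ℓ ℓ2 n n2 Y x a * ℓ x b := by
  have h := hinv.gamma_mul_add hγ hP (fun c => Y x a c + Ff ℓ x a c) (pd a ℓ2 x / 2) b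
  simp only [Psif, phif, mul_div_assoc]
  linear_combination h

theorem sum_Psif_mul_ell (hinv : InvBlocks (γ x) (ℓ x) (ℓ2 x) (P x) (n x) (n2 x))
    (hP : ∀ a b, P x a b = P x b a) (a : Fin m) :
    ∑ c, Psif ℓ ℓ2 P n Y x c a * ℓ x c = pd a ℓ2 x / 2 - ℓ2 x * phif ℓ ℓ2 n n2 Y x a := by
  have h := hinv.mul_ell_add hP (fun c => Y x a c + Ff ℓ x a c) (pd a ℓ2 x / 2)
  simp only [Psif, phif, mul_div_assoc]
  linear_combination h

theorem covD2_GamB_add (hinv : InvBlocks (γ x) (ℓ x) (ℓ2 x) (P x) (n x) (n2 x))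
    (hγ : ∀ a b, γ x a b = γ x b a) (hP : ∀ a b, P x a b = P x b a)
    (hdγ : ∀ a b c, pd a (fun y => γ y b c) x = pd a (fun y => γ y c b) x)
    (hD : ∀ a c, ∑ b, (pd a (fun y => γ y c b) x * n x b + γ x c b * pd a (fun y => n y b) x)
      + pd a n2 x * ℓ x c + n2 x * pd a (fun y => ℓ y c) x = 0) (a b c : Fin m) :
    covD2 (GamB γ ℓ P n Y) γ x a b c + ℓ x b * Kf γ ℓ n n2 Y x a c
      + ℓ x c * Kf γ ℓ n n2 Y x a b = 0 := by
  have hsymm : ∑ d, GamB γ ℓ P n Y x d a c * γ x b d = ∑ d, GamB γ ℓ P n Y x d a c * γ x d b :=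
    Finset.sum_congr rfl fun d _ => by rw [hγ b d]
  rw [covD2, hsymm, sum_GamB_mul_gamma hinv hγ hP hD, sum_GamB_mul_gamma hinv hγ hP hD]
  linear_combination -christoffel1_add_christoffel1 hdγ a b c

theorem covD1_GamB_sub_phif (hinv : InvBlocks (γ x) (ℓ x) (ℓ2 x) (P x) (n x) (n2 x))
    (hγ : ∀ a b, γ x a b = γ x b a) (hP : ∀ a b, P x a b = P x b a)
    (hD : ∀ a c, ∑ b, (pd a (fun y => γ y c b) x * n x b + γ x c b * pd a (fun y => n y b) x)
      + pd a n2 x * ℓ x c + n2 x * pd a (fun y => ℓ y c) x = 0) (a b : Fin m) :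
    covD1 (GamB γ ℓ P n Y) ℓ x a b - phif ℓ ℓ2 n n2 Y x a * ℓ x b
      + ℓ2 x * Kf γ ℓ n n2 Y x a b - ∑ c, γ x b c * Psif ℓ ℓ2 P n Y x c a = 0 := by
  rw [covD1_GamB hinv hγ hP hD, sum_gamma_mul_Psif hinv hγ hP]
  ring

theorem eq_covD1_GamB_add (hinv : InvBlocks (γ x) (ℓ x) (ℓ2 x) (P x) (n x) (n2 x))
    (hγ : ∀ a b, γ x a b = γ x b a) (hP : ∀ a b, P x a b = P x b a)
    (hdγ : ∀ a b c, pd a (fun y => γ y b c) x = pd a (fun y => γ y c b) x)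
    (hD : ∀ a c, ∑ b, (pd a (fun y => γ y c b) x * n x b + γ x c b * pd a (fun y => n y b) x)
      + pd a n2 x * ℓ x c + n2 x * pd a (fun y => ℓ y c) x = 0)
    (hY : ∀ a b, Y x a b = Y x b a) (a b : Fin m) :
    Y x a b = (covD1 (GamB γ ℓ P n Y) ℓ x a b + covD1 (GamB γ ℓ P n Y) ℓ x b a) / 2
      + ℓ2 x * Kf γ ℓ n n2 Y x a b := by
  rw [covD1_GamB hinv hγ hP hD, covD1_GamB hinv hγ hP hD, Ff, Ff]
  linear_combination (1 / 2 : ℝ) * hY a b - (ℓ2 x / 2) * Kf_comm hγ hdγ hY a b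

theorem covD1_sub_covD1 (hΓ : ∀ c a b, Γ x c a b = Γ x c b a) (ω : Vec m) (a b : Fin m) :
    covD1 Γ ω x a b - covD1 Γ ω x b a = 2 * Ff ω x a b := by
  simp only [covD1, Ff, hΓ _ b a]
  ring

theorem sum_gamma_mul_of_compat (hγ : ∀ a b, γ x a b = γ x b a)
    (hΓ : ∀ c a b, Γ x c a b = Γ x c b a) (hK : ∀ a b, K x a b = K x b a)
    (hcompat : ∀ a b c, covD2 Γ γ x a b c + ℓ x b * K x a c + ℓ x c * K x a b = 0)
    (a b c : Fin m) :
    ∑ d, γ x c d * Γ x d a b = christoffel1 γ x c a b + ℓ x c * K x a b := by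
  have u₀ : ∑ d, γ x c d * Γ x d a b = ∑ d, Γ x d a b * γ x d c :=
    Finset.sum_congr rfl fun d _ => by rw [hγ c d, mul_comm]
  have h₁ := hcompat a b c
  have h₂ := hcompat b a c
  have h₃ := hcompat c a b
  have u₁ : ∑ d, Γ x d b a * γ x d c = ∑ d, Γ x d a b * γ x d c :=
    Finset.sum_congr rfl fun d _ => by rw [hΓ d b a]
  have u₂ : ∑ d, Γ x d c b * γ x a d = ∑ d, Γ x d b c * γ x a d :=
    Finset.sum_congr rfl fun d _ => by rw [hΓ d c b]
  have u₃ : ∑ d, Γ x d c a * γ x d b = ∑ d, Γ x d a c * γ x b d :=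
    Finset.sum_congr rfl fun d _ => by rw [hΓ d c a, hγ d b]
  unfold covD2 at h₁ h₂ h₃
  unfold christoffel1
  -- Koszul: `h₁ + h₂ - h₃`, the Γγ-terms cancelling in pairs by torsion-freeness
  linear_combination u₀ + (1 / 2 : ℝ) * (h₃ - h₁ - h₂ - u₁ + u₂ + u₃ + ℓ x b * hK a c
    + ℓ x a * hK b c + ℓ x c * hK b a)

theorem sum_mul_ell_of_eq_covD1 (hΓ : ∀ c a b, Γ x c a b = Γ x c b a)
    (hY : ∀ a b, Y x a b = (covD1 Γ ℓ x a b + covD1 Γ ℓ x b a) / 2 + ℓ2 x * K x a b)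
    (a b : Fin m) :
    ∑ d, Γ x d a b * ℓ x d = symDeriv ℓ x a b - Y x a b + ℓ2 x * K x a b := by
  simp only [hY, covD1, symDeriv, hΓ _ b a]
  ring

theorem eq_GamB_of_compat (hinv : InvBlocks (γ x) (ℓ x) (ℓ2 x) (P x) (n x) (n2 x))
    (hγ : ∀ a b, γ x a b = γ x b a) (hΓ : ∀ c a b, Γ x c a b = Γ x c b a)
    (hK : ∀ a b, K x a b = K x b a)
    (hcompat : ∀ a b c, covD2 Γ γ x a b c + ℓ x b * K x a c + ℓ x c * K x a b = 0)
    (hY : ∀ a b, Y x a b = (covD1 Γ ℓ x a b + covD1 Γ ℓ x b a) / 2 + ℓ2 x * K x a b)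
    (c a b : Fin m) :
    Γ x c a b = GamB γ ℓ P n Y x c a b := by
  rw [← hinv.P_mul_add (fun e => Γ x e a b) (-K x a b) c]
  simp only [sum_gamma_mul_of_compat hγ hΓ hK hcompat, sum_mul_ell_of_eq_covD1 hΓ hY, mul_neg,
    add_neg_cancel_right, GamB_eq]

theorem eq_Kf_of_compat (hinv : InvBlocks (γ x) (ℓ x) (ℓ2 x) (P x) (n x) (n2 x))
    (hγ : ∀ a b, γ x a b = γ x b a) (hΓ : ∀ c a b, Γ x c a b = Γ x c b a)
    (hK : ∀ a b, K x a b = K x b a)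
    (hcompat : ∀ a b c, covD2 Γ γ x a b c + ℓ x b * K x a c + ℓ x c * K x a b = 0)
    (hD : ∀ a c, ∑ b, (pd a (fun y => γ y c b) x * n x b + γ x c b * pd a (fun y => n y b) x)
      + pd a n2 x * ℓ x c + n2 x * pd a (fun y => ℓ y c) x = 0)
    (hY : ∀ a b, Y x a b = (covD1 Γ ℓ x a b + covD1 Γ ℓ x b a) / 2 + ℓ2 x * K x a b)
    (a b : Fin m) :
    K x a b = Kf γ ℓ n n2 Y x a b := by
  rw [← neg_neg (K x a b), ← hinv.n_mul_add hγ (fun e => Γ x e a b) (-K x a b)]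
  simp only [sum_gamma_mul_of_compat hγ hΓ hK hcompat, sum_mul_ell_of_eq_covD1 hΓ hY, mul_neg,
    add_neg_cancel_right, Kf_eq hγ hD]

theorem sum_gamma_mul_add_of_compat (hΓ : ∀ c a b, Γ x c a b = Γ x c b a)
    (hcompat : ∀ a b, covD1 Γ ℓ x a b - φ x a * ℓ x b + ℓ2 x * K x a b
      - ∑ c, γ x b c * Ψ x c a = 0)
    (hY : ∀ a b, Y x a b = (covD1 Γ ℓ x a b + covD1 Γ ℓ x b a) / 2 + ℓ2 x * K x a b)
    (a b : Fin m) :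
    ∑ c, γ x b c * Ψ x c a + ℓ x b * φ x a = Y x a b + Ff ℓ x a b := by
  rw [hY]
  linear_combination -hcompat a b + (1 / 2 : ℝ) * covD1_sub_covD1 hΓ ℓ a b

theorem eq_Psif_of_compat (hinv : InvBlocks (γ x) (ℓ x) (ℓ2 x) (P x) (n x) (n2 x))
    (hΓ : ∀ c a b, Γ x c a b = Γ x c b a)
    (hcompat₂ : ∀ a b, covD1 Γ ℓ x a b - φ x a * ℓ x b + ℓ2 x * K x a b
      - ∑ c, γ x b c * Ψ x c a = 0)
    (hcompat₃ : ∀ a, -(pd a ℓ2 x) / 2 + ∑ c, Ψ x c a * ℓ x c + ℓ2 x * φ x a = 0)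
    (hY : ∀ a b, Y x a b = (covD1 Γ ℓ x a b + covD1 Γ ℓ x b a) / 2 + ℓ2 x * K x a b)
    (b a : Fin m) :
    Ψ x b a = Psif ℓ ℓ2 P n Y x b a := by
  rw [← hinv.P_mul_add (fun c => Ψ x c a) (φ x a) b]
  simp only [sum_gamma_mul_add_of_compat hΓ hcompat₂ hY, Psif]
  linear_combination n x b * hcompat₃ a

theorem eq_phif_of_compat (hinv : InvBlocks (γ x) (ℓ x) (ℓ2 x) (P x) (n x) (n2 x))
    (hγ : ∀ a b, γ x a b = γ x b a) (hΓ : ∀ c a b, Γ x c a b = Γ x c b a)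
    (hcompat₂ : ∀ a b, covD1 Γ ℓ x a b - φ x a * ℓ x b + ℓ2 x * K x a b
      - ∑ c, γ x b c * Ψ x c a = 0)
    (hcompat₃ : ∀ a, -(pd a ℓ2 x) / 2 + ∑ c, Ψ x c a * ℓ x c + ℓ2 x * φ x a = 0)
    (hY : ∀ a b, Y x a b = (covD1 Γ ℓ x a b + covD1 Γ ℓ x b a) / 2 + ℓ2 x * K x a b)
    (a : Fin m) :
    φ x a = phif ℓ ℓ2 n n2 Y x a := by
  rw [← hinv.n_mul_add hγ (fun c => Ψ x c a) (φ x a)]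
  simp only [sum_gamma_mul_add_of_compat hΓ hcompat₂ hY, phif]
  linear_combination n2 x * hcompat₃ a

end Pointwise

theorem pd_congr {U : Set (Fin m → ℝ)} (hU : IsOpen U) {x : Fin m → ℝ} (hx : x ∈ U)
    {f g : Sc m} (h : ∀ y ∈ U, f y = g y) (a : Fin m) : pd a f x = pd a g x := by
  rw [pd, pd, (Filter.eventuallyEq_of_mem (hU.mem_nhds hx) h).fderiv_eq]

theorem MetricData.pd_gamma_mul_n_add {U : Set (Fin m → ℝ)} {γ P : Ten m} {ℓ n : Vec m}
    {ℓ2 n2 : Sc m} (hU : IsOpen U) (hdata : MetricData U γ ℓ ℓ2 P n n2) {x : Fin m → ℝ}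
    (hx : x ∈ U) (a c : Fin m) :
    ∑ b, (pd a (fun y => γ y c b) x * n x b + γ x c b * pd a (fun y => n y b) x)
      + pd a n2 x * ℓ x c + n2 x * pd a (fun y => ℓ y c) x = 0 := by
  obtain ⟨hγ, hℓ, -, -, hn, hn2, -, -, hinv⟩ := hdata
  have hdiff {f : Sc m} (hf : ContDiffOn ℝ (⊤ : ℕ∞) f U) : DifferentiableAt ℝ f x :=
    (hf.contDiffAt (hU.mem_nhds hx)).differentiableAt (by simp)
  have h0 : pd a (fun y => ∑ b, γ y c b * n y b + n2 y * ℓ y c) x = 0 := by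
    rw [pd_congr hU hx fun y hy => (hinv y hy).2.2.2 c]
    simp [pd]
  have hγn := fun b => (hdiff (hγ c b)).fun_mul (hdiff (hn b))
  rw [pd, fderiv_fun_add (.fun_sum fun b _ => hγn b) ((hdiff hn2).fun_mul (hdiff (hℓ c))),
    fderiv_fun_sum fun b _ => hγn b] at h0
  simp only [fderiv_fun_mul (hdiff (hγ c _)) (hdiff (hn _)),
    fderiv_fun_mul (hdiff hn2) (hdiff (hℓ c))] at h0
  simp only [pd]
  simpa [mul_comm, add_comm, add_left_comm, add_assoc] using h0

end HypData

open HypData in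
theorem statement2_general (m : ℕ) (U : Set (Fin m → ℝ)) (hU : IsOpen U)
    (γ : Ten m) (ℓ : Vec m) (ℓ2 : Sc m) (P : Ten m) (n : Vec m) (n2 : Sc m)
    (hdata : MetricData U γ ℓ ℓ2 P n n2) :
    -- direct part: the fields defined from an arbitrary smooth symmetric Y solve the system
    (∀ Y : Ten m, SmTen U Y → (∀ x ∈ U, ∀ a b, Y x a b = Y x b a) →
      ((∀ x ∈ U, ∀ c a b, GamB γ ℓ P n Y x c a b = GamB γ ℓ P n Y x c b a)
      ∧ (∀ x ∈ U, ∀ a b, Kf γ ℓ n n2 Y x a b = Kf γ ℓ n n2 Y x b a)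
      ∧ (∀ x ∈ U, ∀ a b c,
          covD2 (GamB γ ℓ P n Y) γ x a b c + ℓ x b * Kf γ ℓ n n2 Y x a c
            + ℓ x c * Kf γ ℓ n n2 Y x a b = 0)
      ∧ (∀ x ∈ U, ∀ a b,
          covD1 (GamB γ ℓ P n Y) ℓ x a b - phif ℓ ℓ2 n n2 Y x a * ℓ x b
            + ℓ2 x * Kf γ ℓ n n2 Y x a b
            - (∑ c, γ x b c * Psif ℓ ℓ2 P n Y x c a) = 0)
      ∧ (∀ x ∈ U, ∀ a,
          -(pd a ℓ2 x) / 2 + (∑ c, Psif ℓ ℓ2 P n Y x c a * ℓ x c)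
            + ℓ2 x * phif ℓ ℓ2 n n2 Y x a = 0)
      ∧ (∀ x ∈ U, ∀ a b,
          Y x a b = (covD1 (GamB γ ℓ P n Y) ℓ x a b
              + covD1 (GamB γ ℓ P n Y) ℓ x b a) / 2
            + ℓ2 x * Kf γ ℓ n n2 Y x a b)))
    ∧
    -- converse part: any solution of the compatibility equations arises this way
    (∀ (Γ : Conn m) (K : Ten m) (φ : Vec m) (Ψ : Ten m),
      (∀ x ∈ U, ∀ c a b, Γ x c a b = Γ x c b a) →
      (∀ x ∈ U, ∀ a b, K x a b = K x b a) →
      (∀ x ∈ U, ∀ a b c,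
        covD2 Γ γ x a b c + ℓ x b * K x a c + ℓ x c * K x a b = 0) →
      (∀ x ∈ U, ∀ a b,
        covD1 Γ ℓ x a b - φ x a * ℓ x b + ℓ2 x * K x a b
          - (∑ c, γ x b c * Ψ x c a) = 0) →
      (∀ x ∈ U, ∀ a,
        -(pd a ℓ2 x) / 2 + (∑ c, Ψ x c a * ℓ x c) + ℓ2 x * φ x a = 0) →
      ∃ Y : Ten m,
        (∀ x ∈ U, ∀ a b, Y x a b = Y x b a) ∧
        (∀ x ∈ U, ∀ a b,
          Y x a b = (covD1 Γ ℓ x a b + covD1 Γ ℓ x b a) / 2 + ℓ2 x * K x a b) ∧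
        (∀ x ∈ U, ∀ c a b, Γ x c a b = GamB γ ℓ P n Y x c a b) ∧
        (∀ x ∈ U, ∀ a b, K x a b = Kf γ ℓ n n2 Y x a b) ∧
        (∀ x ∈ U, ∀ a, φ x a = phif ℓ ℓ2 n n2 Y x a) ∧
        (∀ x ∈ U, ∀ b a, Ψ x b a = Psif ℓ ℓ2 P n Y x b a)) := by
  obtain ⟨-, -, -, -, -, -, hγ, hP, hinv⟩ := id hdata
  have hdγ : ∀ x ∈ U, ∀ a b c, pd a (fun y => γ y b c) x = pd a (fun y => γ y c b) x :=
    fun x hx a b c => pd_congr hU hx (fun y hy => hγ y hy b c) a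
  have hD := fun x (hx : x ∈ U) => hdata.pd_gamma_mul_n_add hU hx
  refine ⟨fun Y _ hY => ⟨fun x hx => GamB_comm (hdγ x hx) (hY x hx),
      fun x hx => Kf_comm (hγ x hx) (hdγ x hx) (hY x hx),
      fun x hx => covD2_GamB_add (hinv x hx) (hγ x hx) (hP x hx) (hdγ x hx) (hD x hx),
      fun x hx => covD1_GamB_sub_phif (hinv x hx) (hγ x hx) (hP x hx) (hD x hx),
      fun x hx a => by rw [sum_Psif_mul_ell (hinv x hx) (hP x hx)]; ring,
      fun x hx => eq_covD1_GamB_add (hinv x hx) (hγ x hx) (hP x hx) (hdγ x hx) (hD x hx)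
        (hY x hx)⟩, fun Γ K φ Ψ hΓ hK h₁ h₂ h₃ => ?_⟩
  refine ⟨fun x a b => (covD1 Γ ℓ x a b + covD1 Γ ℓ x b a) / 2 + ℓ2 x * K x a b,
    fun x hx a b => by linear_combination ℓ2 x * hK x hx a b, fun _ _ _ _ => rfl,
    fun x hx => eq_GamB_of_compat (hinv x hx) (hγ x hx) (hΓ x hx) (hK x hx) (h₁ x hx)
      fun _ _ => rfl,
    fun x hx => eq_Kf_of_compat (hinv x hx) (hγ x hx) (hΓ x hx) (hK x hx) (h₁ x hx) (hD x hx)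
      fun _ _ => rfl,
    fun x hx => eq_phif_of_compat (hinv x hx) (hγ x hx) (hΓ x hx) (h₂ x hx) (h₃ x hx)
      fun _ _ => rfl,
    fun x hx => eq_Psif_of_compat (hinv x hx) (hΓ x hx) (h₂ x hx) (h₃ x hx) fun _ _ => rfl⟩

open HypData in
/-- Proposition 1 of the paper.  Given metric hypersurface data and an
arbitrary symmetric `Y_{ab}`, the fields `Γ̄, K, φ, Ψ` defined by (GambProp)-(PsiProp)
give a torsion-free connection solving the compatibility equations, and conversely
every solution of the compatibility equations is of this form with
`Y_{ab} = ½(∇̄_aℓ_b + ∇̄_bℓ_a) + ℓ⁽²⁾K_{ab}`. -/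
theorem statement2 (m : ℕ) (hm : 1 ≤ m) (U : Set (Fin m → ℝ)) (hU : IsOpen U)
    (γ : Ten m) (ℓ : Vec m) (ℓ2 : Sc m) (P : Ten m) (n : Vec m) (n2 : Sc m)
    (hdata : MetricData U γ ℓ ℓ2 P n n2) :
    -- direct part: the fields defined from an arbitrary smooth symmetric Y solve the system
    (∀ Y : Ten m, SmTen U Y → (∀ x ∈ U, ∀ a b, Y x a b = Y x b a) →
      ((∀ x ∈ U, ∀ c a b, GamB γ ℓ P n Y x c a b = GamB γ ℓ P n Y x c b a)
      ∧ (∀ x ∈ U, ∀ a b, Kf γ ℓ n n2 Y x a b = Kf γ ℓ n n2 Y x b a)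
      ∧ (∀ x ∈ U, ∀ a b c,
          covD2 (GamB γ ℓ P n Y) γ x a b c + ℓ x b * Kf γ ℓ n n2 Y x a c
            + ℓ x c * Kf γ ℓ n n2 Y x a b = 0)
      ∧ (∀ x ∈ U, ∀ a b,
          covD1 (GamB γ ℓ P n Y) ℓ x a b - phif ℓ ℓ2 n n2 Y x a * ℓ x b
            + ℓ2 x * Kf γ ℓ n n2 Y x a b
            - (∑ c, γ x b c * Psif ℓ ℓ2 P n Y x c a) = 0)
      ∧ (∀ x ∈ U, ∀ a,
          -(pd a ℓ2 x) / 2 + (∑ c, Psif ℓ ℓ2 P n Y x c a * ℓ x c)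
            + ℓ2 x * phif ℓ ℓ2 n n2 Y x a = 0)
      ∧ (∀ x ∈ U, ∀ a b,
          Y x a b = (covD1 (GamB γ ℓ P n Y) ℓ x a b
              + covD1 (GamB γ ℓ P n Y) ℓ x b a) / 2
            + ℓ2 x * Kf γ ℓ n n2 Y x a b)))
    ∧
    -- converse part: any solution of the compatibility equations arises this way
    (∀ (Γ : Conn m) (K : Ten m) (φ : Vec m) (Ψ : Ten m),
      (∀ x ∈ U, ∀ c a b, Γ x c a b = Γ x c b a) →
      (∀ x ∈ U, ∀ a b, K x a b = K x b a) →
      (∀ x ∈ U, ∀ a b c,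
        covD2 Γ γ x a b c + ℓ x b * K x a c + ℓ x c * K x a b = 0) →
      (∀ x ∈ U, ∀ a b,
        covD1 Γ ℓ x a b - φ x a * ℓ x b + ℓ2 x * K x a b
          - (∑ c, γ x b c * Ψ x c a) = 0) →
      (∀ x ∈ U, ∀ a,
        -(pd a ℓ2 x) / 2 + (∑ c, Ψ x c a * ℓ x c) + ℓ2 x * φ x a = 0) →
      ∃ Y : Ten m,
        (∀ x ∈ U, ∀ a b, Y x a b = Y x b a) ∧
        (∀ x ∈ U, ∀ a b,
          Y x a b = (covD1 Γ ℓ x a b + covD1 Γ ℓ x b a) / 2 + ℓ2 x * K x a b) ∧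
        (∀ x ∈ U, ∀ c a b, Γ x c a b = GamB γ ℓ P n Y x c a b) ∧
        (∀ x ∈ U, ∀ a b, K x a b = Kf γ ℓ n n2 Y x a b) ∧
        (∀ x ∈ U, ∀ a, φ x a = phif ℓ ℓ2 n n2 Y x a) ∧
        (∀ x ∈ U, ∀ b a, Ψ x b a = Psif ℓ ℓ2 P n Y x b a)) :=
  statement2_general m U hU γ ℓ ℓ2 P n n2 hdata
end
end

section
/- Let (γ, ℓ, ℓ⁽²⁾) be coordinate hypersurface metric data on U with inverse blocks (P, n, n⁽²⁾), let Y = (Y_{ab}) be a smooth symmetric field, and define K_{ab} := n⁽²⁾Y_{ab} + ½(n^c∂_cγ_{ab} + γ_{cb}∂_an^c + γ_{ac}∂_bn^c) + ½(ℓ_a∂_bn⁽²⁾ + ℓ_b∂_an⁽²⁾). Then n^b K_{ab} = n⁽²⁾ n^b (Y_{ab} + F_{ab}) + ½(∂_a n⁽²⁾ + (n⁽²⁾)² ∂_a ℓ⁽²⁾). -/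
open scoped BigOperators

noncomputable section

/-!
Apart from `n⁽²⁾n^bY_{ab}`, the contraction `2n^bK_{ab}` is built from derivatives of the
inverse-block identities `γ_{ab}n^b + n⁽²⁾ℓ_a = 0` and `n^bℓ_b + n⁽²⁾ℓ⁽²⁾ = 1`, which hold on the
open set `U` and so may be differentiated. `n^bn^c∂_cγ_{ab} + n^bγ_{ac}∂_bn^c + ℓ_an^b∂_bn⁽²⁾` is
the first identity differentiated along `n`, minus `n⁽²⁾n^b∂_bℓ_a`; the term
`n^bγ_{cb}∂_an^c = -n⁽²⁾ℓ_c∂_an^c` is rewritten with the `∂_a`-derivative of the second one; and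
`n^bℓ_b = 1 - n⁽²⁾ℓ⁽²⁾`.
-/

namespace HypData

variable {m : ℕ}

section Calculus

variable {x : Fin m → ℝ}

theorem pd_add {f g : Sc m} (hf : DifferentiableAt ℝ f x) (hg : DifferentiableAt ℝ g x)
    (a : Fin m) : pd a (fun y => f y + g y) x = pd a f x + pd a g x := by
  simp [pd, fderiv_fun_add hf hg]

theorem pd_mul {f g : Sc m} (hf : DifferentiableAt ℝ f x) (hg : DifferentiableAt ℝ g x)
    (a : Fin m) : pd a (fun y => f y * g y) x = pd a f x * g x + f x * pd a g x := by
  simp only [pd, fderiv_fun_mul hf hg, add_apply, smul_apply, smul_eq_mul]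
  ring

theorem pd_sum {f : Fin m → Sc m} (hf : ∀ i, DifferentiableAt ℝ (f i) x) (a : Fin m) :
    pd a (fun y => ∑ i, f i y) x = ∑ i, pd a (f i) x := by
  simp [pd, fderiv_fun_sum fun i _ => hf i]

theorem pd_eq_zero_of_eqOn_const {U : Set (Fin m → ℝ)} (hU : IsOpen U) (hx : x ∈ U)
    {f : Sc m} {C : ℝ} (hf : ∀ y ∈ U, f y = C) (a : Fin m) : pd a f x = 0 := by
  have hfC : f =ᶠ[nhds x] fun _ => C := Filter.eventuallyEq_of_mem (hU.mem_nhds hx) hf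
  simp [pd, hfC.fderiv_eq]

theorem pd_sum_mul_add_mul_eq_zero {U : Set (Fin m → ℝ)} (hU : IsOpen U) (hx : x ∈ U)
    {f g : Fin m → Sc m} {h k : Sc m} {C : ℝ}
    (hC : ∀ y ∈ U, ∑ b, f b y * g b y + h y * k y = C)
    (hf : ∀ b, DifferentiableAt ℝ (f b) x) (hg : ∀ b, DifferentiableAt ℝ (g b) x)
    (hh : DifferentiableAt ℝ h x) (hk : DifferentiableAt ℝ k x) (a : Fin m) :
    ∑ b, (pd a (f b) x * g b x + f b x * pd a (g b) x) + (pd a h x * k x + h x * pd a k x)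
      = 0 := by
  rw [← pd_eq_zero_of_eqOn_const hU hx hC a,
    pd_add (.fun_sum fun b _ => (hf b).fun_mul (hg b)) (hh.fun_mul hk),
    pd_sum (f := fun b y => f b y * g b y) fun b => (hf b).fun_mul (hg b), pd_mul hh hk]
  simp only [pd_mul (hf _) (hg _)]

theorem SmSc.differentiableAt {U : Set (Fin m → ℝ)} {f : Sc m} (hf : SmSc U f)
    (hU : IsOpen U) (hx : x ∈ U) : DifferentiableAt ℝ f x :=
  (hf.contDiffAt (hU.mem_nhds hx)).differentiableAt (by simp)

end Calculus

section Contraction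

variable (γ : Ten m) (ℓ : Vec m) (ℓ2 : Sc m) (n : Vec m) (n2 : Sc m) (x : Fin m → ℝ)

theorem two_mul_sum_mul_Uf (a : Fin m) :
    2 * ∑ b, n x b * Uf γ ℓ n n2 x a b
      = (∑ c, n x c * ∑ b, (pd c (γ · a b) x * n x b + γ x a b * pd c (n · b) x))
        + (∑ c, pd a (n · c) x * ∑ b, γ x c b * n x b)
        + ℓ x a * (∑ c, n x c * pd c n2 x)
        + (∑ b, n x b * ℓ x b) * pd a n2 x := by
  have hswap_dγ : ∑ b, n x b * ∑ c, n x c * pd c (γ · a b) x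
      = ∑ c, n x c * ∑ b, pd c (γ · a b) x * n x b := by
    simp only [Finset.mul_sum]
    rw [Finset.sum_comm]
    exact Finset.sum_congr rfl fun _ _ => Finset.sum_congr rfl fun _ _ => by ring
  have hswap_dn : ∑ b, n x b * ∑ c, γ x c b * pd a (n · c) x
      = ∑ c, pd a (n · c) x * ∑ b, γ x c b * n x b := by
    simp only [Finset.mul_sum]
    rw [Finset.sum_comm]
    exact Finset.sum_congr rfl fun _ _ => Finset.sum_congr rfl fun _ _ => by ring
  calc 2 * ∑ b, n x b * Uf γ ℓ n n2 x a b
      = ∑ b, (n x b * ∑ c, n x c * pd c (γ · a b) x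
          + n x b * ∑ c, γ x c b * pd a (n · c) x
          + n x b * ∑ c, γ x a c * pd b (n · c) x
          + ℓ x a * (n x b * pd b n2 x) + n x b * ℓ x b * pd a n2 x) := by
        rw [Finset.mul_sum]
        refine Finset.sum_congr rfl fun b _ => ?_
        simp only [Uf, Finset.sum_add_distrib]
        ring
    _ = _ := by
        simp only [Finset.sum_add_distrib, ← Finset.mul_sum, ← Finset.sum_mul, hswap_dγ, hswap_dn,
          mul_add]
        ring

theorem sum_mul_Ff (a : Fin m) :
    ∑ b, n x b * Ff ℓ x a b
      = ((∑ b, n x b * pd a (ℓ · b) x) - ∑ b, n x b * pd b (ℓ · a) x) / 2 := by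
  simp only [Ff, mul_div_assoc', ← Finset.sum_div, mul_sub, Finset.sum_sub_distrib]

theorem sum_mul_Uf (a : Fin m)
    (hγn : ∀ c, ∑ b, γ x c b * n x b + n2 x * ℓ x c = 0)
    (hnℓ : ∑ b, n x b * ℓ x b + n2 x * ℓ2 x = 1)
    (hγn' : ∀ e, ∑ b, (pd e (γ · a b) x * n x b + γ x a b * pd e (n · b) x)
      + (pd e n2 x * ℓ x a + n2 x * pd e (ℓ · a) x) = 0)
    (hnℓ' : ∑ b, (pd a (n · b) x * ℓ x b + n x b * pd a (ℓ · b) x)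
      + (pd a n2 x * ℓ2 x + n2 x * pd a ℓ2 x) = 0) :
    ∑ b, n x b * Uf γ ℓ n n2 x a b
      = n2 x * ∑ b, n x b * Ff ℓ x a b + (pd a n2 x + n2 x ^ 2 * pd a ℓ2 x) / 2 := by
  have hγn_n : (∑ c, n x c * ∑ b, (pd c (γ · a b) x * n x b + γ x a b * pd c (n · b) x))
      + ℓ x a * (∑ c, n x c * pd c n2 x) + n2 x * ∑ c, n x c * pd c (ℓ · a) x = 0 := by
    rw [Finset.mul_sum _ _ (ℓ x a), Finset.mul_sum _ _ (n2 x), ← Finset.sum_add_distrib,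
      ← Finset.sum_add_distrib]
    exact Finset.sum_eq_zero fun c _ => by linear_combination n x c * hγn' c
  have hγn_dn : (∑ c, pd a (n · c) x * ∑ b, γ x c b * n x b)
      + n2 x * ∑ c, pd a (n · c) x * ℓ x c = 0 := by
    rw [Finset.mul_sum _ _ (n2 x), ← Finset.sum_add_distrib]
    exact Finset.sum_eq_zero fun c _ => by linear_combination pd a (n · c) x * hγn c
  rw [Finset.sum_add_distrib] at hnℓ'
  rw [sum_mul_Ff]
  linear_combination (two_mul_sum_mul_Uf γ ℓ n n2 x a + hγn_n + hγn_dn - n2 x * hnℓ'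
    + pd a n2 x * hnℓ) / 2

end Contraction

end HypData

open HypData in
theorem statement3_general (m : ℕ) (U : Set (Fin m → ℝ)) (hU : IsOpen U)
    (γ : Ten m) (ℓ : Vec m) (ℓ2 : Sc m) (P : Ten m) (n : Vec m) (n2 : Sc m)
    (hdata : MetricData U γ ℓ ℓ2 P n n2)
    (Y : Ten m) :
    ∀ x ∈ U, ∀ a,
      (∑ b, n x b * Kf γ ℓ n n2 Y x a b)
        = n2 x * (∑ b, n x b * (Y x a b + Ff ℓ x a b))
          + (pd a n2 x + n2 x ^ 2 * pd a ℓ2 x) / 2 := by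
  obtain ⟨hγ, hℓ, hℓ2, -, hn, hn2, -, -, hinv⟩ := hdata
  intro x hx a
  have dγ : ∀ c b, DifferentiableAt ℝ (γ · c b) x := fun c b =>
    SmSc.differentiableAt (hγ c b) hU hx
  have dℓ : ∀ b, DifferentiableAt ℝ (ℓ · b) x := fun b => SmSc.differentiableAt (hℓ b) hU hx
  have dn : ∀ b, DifferentiableAt ℝ (n · b) x := fun b => SmSc.differentiableAt (hn b) hU hx
  have hγn' e := pd_sum_mul_add_mul_eq_zero hU hx (fun y hy => (hinv y hy).2.2.2 a)
    (dγ a) dn (hn2.differentiableAt hU hx) (dℓ a) e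
  have hnℓ' := pd_sum_mul_add_mul_eq_zero hU hx (fun y hy => (hinv y hy).2.2.1)
    dn dℓ (hn2.differentiableAt hU hx) (hℓ2.differentiableAt hU hx) a
  simp only [Kf, mul_add, Finset.sum_add_distrib, mul_left_comm (n x _) (n2 x),
    ← Finset.mul_sum]
  rw [sum_mul_Uf γ ℓ ℓ2 n n2 x a (hinv x hx).2.2.2 (hinv x hx).2.2.1 hγn' hnℓ']
  ring

open HypData in
/-- Corollary 1 of the paper, the contraction `n^bK_{ab}`. -/
theorem statement3 (m : ℕ) (hm : 1 ≤ m) (U : Set (Fin m → ℝ)) (hU : IsOpen U)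
    (γ : Ten m) (ℓ : Vec m) (ℓ2 : Sc m) (P : Ten m) (n : Vec m) (n2 : Sc m)
    (hdata : MetricData U γ ℓ ℓ2 P n n2)
    (Y : Ten m) (hYsm : SmTen U Y) (hYs : ∀ x ∈ U, ∀ a b, Y x a b = Y x b a) :
    ∀ x ∈ U, ∀ a,
      (∑ b, n x b * Kf γ ℓ n n2 Y x a b)
        = n2 x * (∑ b, n x b * (Y x a b + Ff ℓ x a b))
          + (pd a n2 x + n2 x ^ 2 * pd a ℓ2 x) / 2 :=
  statement3_general m U hU γ ℓ ℓ2 P n n2 hdata Y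
end
end

section
/- Let W be an (m+1)-dimensional real vector space with a nondegenerate symmetric bilinear form g (in the paper g is Lorentzian; only nondegeneracy is used), and let R : W×W×W×W → ℝ be a quadrilinear map with the symmetries R(X,Y,Z,T) = −R(Y,X,Z,T) = −R(X,Y,T,Z) and R(X,Y,Z,T) = R(Z,T,X,Y). Let e_1,…,e_m, ℓ be a basis of W, set γ_{ab} := g(e_a,e_b), ℓ_a := g(ℓ,e_a), ℓ⁽²⁾ := g(ℓ,ℓ), let (P^{ab}, n^a, n⁽²⁾) be the inverse blocks of the Gram matrix 𝔸 = [[γ, ℓ],[ℓᵀ, ℓ⁽²⁾]], and let ν ∈ W be the unique vector with g(ν, e_a) = 0 for all a and g(ν, ℓ) = 1. Then the Einstein bilinear form Ein of (g, R) satisfies: (1) Ein(ν, ℓ) = −R(ℓ, e_b, e_c, e_d) n^c P^{bd} − ½ R(e_a, e_b, e_c, e_d) P^{ac} P^{bd}; (2) Ein(ν, e_c) = R(ℓ, e_b, e_c, e_d)(n⁽²⁾P^{bd} − n^b n^d) + R(e_a, e_b, e_c, e_d) n^a P^{bd} (summation over repeated indices, all ranging over {1,…,m}). -/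
open scoped BigOperators

noncomputable section

namespace Statement10

open HypData

variable {m : ℕ} {W : Type*} [AddCommGroup W] [Module ℝ W]

/-- Inverse Gram matrix, in block form `[[P,n],[nᵀ,n⁽²⁾]]`. -/
def Ginv (P : Fin m → Fin m → ℝ) (n : Fin m → ℝ) (n2 : ℝ) :
    Fin m ⊕ Unit → Fin m ⊕ Unit → ℝ
  | Sum.inl a, Sum.inl b => P a b
  | Sum.inl a, Sum.inr _ => n a
  | Sum.inr _, Sum.inl b => n b
  | Sum.inr _, Sum.inr _ => n2

/-- Ricci bilinear form of `(g,R)`, computed with the basis `b` whose inverse Gram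
matrix has blocks `(P,n,n2)`. -/
def Ric (b : Module.Basis (Fin m ⊕ Unit) ℝ W)
    (R : W →ₗ[ℝ] W →ₗ[ℝ] W →ₗ[ℝ] W →ₗ[ℝ] ℝ)
    (P : Fin m → Fin m → ℝ) (n : Fin m → ℝ) (n2 : ℝ) (X Z : W) : ℝ :=
  ∑ i, ∑ j, Ginv P n n2 i j * R (b i) X (b j) Z

/-- Scalar curvature. -/
def Scal (b : Module.Basis (Fin m ⊕ Unit) ℝ W)
    (R : W →ₗ[ℝ] W →ₗ[ℝ] W →ₗ[ℝ] W →ₗ[ℝ] ℝ)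
    (P : Fin m → Fin m → ℝ) (n : Fin m → ℝ) (n2 : ℝ) : ℝ :=
  ∑ i, ∑ j, Ginv P n n2 i j * Ric b R P n n2 (b i) (b j)

/-- Einstein bilinear form `Ein = Ric − ½ Scal g`. -/
def Ein (g : LinearMap.BilinForm ℝ W) (b : Module.Basis (Fin m ⊕ Unit) ℝ W)
    (R : W →ₗ[ℝ] W →ₗ[ℝ] W →ₗ[ℝ] W →ₗ[ℝ] ℝ)
    (P : Fin m → Fin m → ℝ) (n : Fin m → ℝ) (n2 : ℝ) (X Z : W) : ℝ :=
  Ric b R P n n2 X Z - Scal b R P n n2 / 2 * g X Z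

/-!
The vector `ν` is the `g`-dual basis vector `bˡ = Σ_j G^{ℓj} b_j`. In terms of the dual basis
`bⁱ` the contractions read `Ric(X,Z) = Σ_j R(bʲ, X, b_j, Z)` and
`Scal = Σ_{i,j} R(bⁱ, bʲ, b_i, b_j)`. In `Ein(ν, ℓ)` the terms of `Scal` with an index equal to
`ℓ` cancel `Ric(ν, ℓ)`, leaving `-½ Σ_{a,c} R(bᵃ, bᶜ, e_a, e_c)`; in `Ein(ν, e_c)` only the Ricci
term survives. Substituting `bᵃ = P^{ab} e_b + nᵃ ℓ` and `ν = nᵇ e_b + n⁽²⁾ ℓ` and using the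
symmetries of `R` gives both formulas.
-/

section Curvature

variable (b : Module.Basis (Fin m ⊕ Unit) ℝ W)
  (R : W →ₗ[ℝ] W →ₗ[ℝ] W →ₗ[ℝ] W →ₗ[ℝ] ℝ) (P : Fin m → Fin m → ℝ) (n : Fin m → ℝ) (n2 : ℝ)

lemma ginv_comm (hP : ∀ a c, P a c = P c a) (i j : Fin m ⊕ Unit) :
    Ginv P n n2 i j = Ginv P n n2 j i := by
  rcases i with a | ⟨⟩ <;> rcases j with c | ⟨⟩ <;> simp [Ginv, hP]

lemma ginv_mul_toMatrix {g : LinearMap.BilinForm ℝ W} (hg : ∀ v w, g v w = g w v)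
    (hinv : InvBlocks (fun a c => g (b (.inl a)) (b (.inl c)))
      (fun a => g (b (.inr ())) (b (.inl a))) (g (b (.inr ())) (b (.inr ()))) P n n2) :
    Matrix.of (Ginv P n n2) * LinearMap.BilinForm.toMatrix b g = 1 := by
  obtain ⟨h1, h2, h3, h4⟩ := hinv
  ext i j
  rcases i with a | ⟨⟩ <;> rcases j with c | ⟨⟩ <;>
    simp only [Matrix.mul_apply, Fintype.sum_sum_type, Matrix.one_apply, Matrix.of_apply, Ginv,
      LinearMap.BilinForm.toMatrix_apply, Finset.univ_unique, Finset.sum_singleton, Sum.inl.injEq,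
      reduceCtorEq, if_false, if_true]
  · simpa [kd] using h1 a c
  · simpa [hg (b (.inl _)), mul_comm] using h2 a
  · simpa [hg (b (.inl _)) (b (.inl c)), mul_comm] using h4 c
  · simpa [hg (b (.inl _)), mul_comm] using h3

lemma symm_of_ginv_mul_toMatrix_eq_one {g : LinearMap.BilinForm ℝ W}
    (hg : ∀ v w, g v w = g w v)
    (hBA : Matrix.of (Ginv P n n2) * LinearMap.BilinForm.toMatrix b g = 1) (a c : Fin m) :
    P a c = P c a := by
  have hA : (LinearMap.BilinForm.toMatrix b g).IsSymm := by
    ext i j; simp [LinearMap.BilinForm.toMatrix_apply, hg]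
  have hB : (Matrix.of (Ginv P n n2)).IsSymm := Matrix.inv_eq_left_inv hBA ▸ hA.inv
  exact hB.apply (.inl c) (.inl a)

/-- The `g`-dual basis vector `bⁱ = Σ_p G^{ip} b_p`. -/
def dualVec (i : Fin m ⊕ Unit) : W := ∑ p, Ginv P n n2 i p • b p

lemma dualVec_inl (a : Fin m) :
    dualVec b P n n2 (.inl a) = ∑ c, P a c • b (.inl c) + n a • b (.inr ()) := by
  simp [dualVec, Fintype.sum_sum_type, Ginv]

lemma dualVec_inr :
    dualVec b P n n2 (.inr ()) = ∑ c, n c • b (.inl c) + n2 • b (.inr ()) := by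
  simp [dualVec, Fintype.sum_sum_type, Ginv]

lemma apply_dualVec_basis {g : LinearMap.BilinForm ℝ W}
    (hBA : Matrix.of (Ginv P n n2) * LinearMap.BilinForm.toMatrix b g = 1) (i k : Fin m ⊕ Unit) :
    g (dualVec b P n n2 i) (b k) = if i = k then 1 else 0 := by
  rw [← Matrix.one_apply, ← hBA]
  simp [dualVec, Matrix.mul_apply, LinearMap.BilinForm.toMatrix_apply]

lemma eq_dualVec_inr {g : LinearMap.BilinForm ℝ W} (hnd : ∀ v : W, (∀ w : W, g v w = 0) → v = 0)
    (hBA : Matrix.of (Ginv P n n2) * LinearMap.BilinForm.toMatrix b g = 1) {ν : W}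
    (hν0 : ∀ a, g ν (b (.inl a)) = 0) (hν1 : g ν (b (.inr ())) = 1) :
    ν = dualVec b P n n2 (.inr ()) := by
  have hg : g ν = g (dualVec b P n n2 (.inr ())) := b.ext fun k => by
    rcases k with a | ⟨⟩ <;> simp [apply_dualVec_basis b P n n2 hBA, hν0, hν1]
  exact sub_eq_zero.mp (hnd _ fun w => by simp [hg])

lemma apply_self_eq_zero (hR1 : ∀ X Z T S : W, R X Z T S = -R Z X T S) (X T S : W) :
    R X X T S = 0 := by
  linarith [hR1 X X T S]

lemma ric_eq_sum (hP : ∀ a c, P a c = P c a) (X Z : W) :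
    Ric b R P n n2 X Z = ∑ j, R (dualVec b P n n2 j) X (b j) Z := by
  simp only [Ric, dualVec, map_sum, map_smul, LinearMap.sum_apply, LinearMap.smul_apply,
    smul_eq_mul]
  rw [Finset.sum_comm]
  exact Finset.sum_congr rfl fun j _ => Finset.sum_congr rfl fun i _ => by
    rw [ginv_comm P n n2 hP]

lemma scal_eq_sum (hP : ∀ a c, P a c = P c a) :
    Scal b R P n n2 = ∑ i, ∑ j, R (dualVec b P n n2 i) (dualVec b P n n2 j) (b i) (b j) := by
  simp_rw [Scal, ric_eq_sum b R P n n2 hP, Finset.mul_sum]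
  rw [Finset.sum_comm (f := fun i j => R (dualVec b P n n2 i) _ _ _), Finset.sum_comm]
  refine Finset.sum_congr rfl fun j _ => ?_
  rw [Finset.sum_comm]
  refine Finset.sum_congr rfl fun k _ => ?_
  have hd : dualVec b P n n2 j = ∑ i, Ginv P n n2 j i • b i := rfl
  simp only [hd, map_sum, map_smul, LinearMap.sum_apply, LinearMap.smul_apply, smul_eq_mul]
  exact Finset.sum_congr rfl fun i _ => by rw [ginv_comm P n n2 hP]

lemma ein_basis_inr_eq {g : LinearMap.BilinForm ℝ W} (hP : ∀ a c, P a c = P c a)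
    (hR1 : ∀ X Z T S : W, R X Z T S = -R Z X T S) (hR2 : ∀ X Z T S : W, R X Z T S = -R X Z S T)
    {ν : W} (hν : ν = dualVec b P n n2 (.inr ())) (hν1 : g ν (b (.inr ())) = 1) :
    Ein g b R P n n2 ν (b (.inr ())) = -(∑ a, ∑ c,
      R (dualVec b P n n2 (.inl a)) (dualVec b P n n2 (.inl c)) (b (.inl a)) (b (.inl c))) / 2 := by
  have hswap : ∀ c, R ν (dualVec b P n n2 (.inl c)) (b (.inr ())) (b (.inl c))
      = R (dualVec b P n n2 (.inl c)) ν (b (.inl c)) (b (.inr ())) := fun c => by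
    rw [hR1, hR2, neg_neg]
  rw [Ein, hν1, ric_eq_sum b R P n n2 hP, scal_eq_sum b R P n n2 hP]
  simp only [Fintype.sum_sum_type, Finset.univ_unique, Finset.sum_singleton, ← hν, hswap,
    apply_self_eq_zero R hR1, Finset.sum_add_distrib]
  ring

lemma ein_basis_inl_eq {g : LinearMap.BilinForm ℝ W} (hP : ∀ a c, P a c = P c a)
    (hR1 : ∀ X Z T S : W, R X Z T S = -R Z X T S)
    {ν : W} (hν : ν = dualVec b P n n2 (.inr ())) (c : Fin m) (hν0 : g ν (b (.inl c)) = 0) :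
    Ein g b R P n n2 ν (b (.inl c)) =
      ∑ d, R (dualVec b P n n2 (.inl d)) ν (b (.inl d)) (b (.inl c)) := by
  rw [Ein, hν0, mul_zero, sub_zero, ric_eq_sum b R P n n2 hP, Fintype.sum_sum_type]
  simp [← hν, apply_self_eq_zero R hR1]

lemma apply_sum_add_smul (hR1 : ∀ X Z T S : W, R X Z T S = -R Z X T S)
    (u v : Fin m → ℝ) (s t : ℝ) (X Z : W) :
    R (∑ p, u p • b (.inl p) + s • b (.inr ())) (∑ q, v q • b (.inl q) + t • b (.inr ())) X Z
      = ∑ p, ∑ q, u p * v q * R (b (.inl p)) (b (.inl q)) X Z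
        + t * ∑ p, u p * R (b (.inl p)) (b (.inr ())) X Z
        + s * ∑ q, v q * R (b (.inr ())) (b (.inl q)) X Z := by
  simp only [map_add, map_sum, map_smul, LinearMap.add_apply, LinearMap.sum_apply,
    LinearMap.smul_apply, smul_eq_mul, apply_self_eq_zero R hR1, Finset.mul_sum,
    Finset.sum_add_distrib, mul_add]
  rw [Finset.sum_comm]
  simp only [mul_assoc, mul_left_comm]
  ring

lemma sum_apply_dualVec_inl_inl (hP : ∀ a c, P a c = P c a)
    (hR1 : ∀ X Z T S : W, R X Z T S = -R Z X T S) (hR2 : ∀ X Z T S : W, R X Z T S = -R X Z S T)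
    (hR3 : ∀ X Z T S : W, R X Z T S = R T S X Z) :
    ∑ a, ∑ c, R (dualVec b P n n2 (.inl a)) (dualVec b P n n2 (.inl c)) (b (.inl a)) (b (.inl c))
      = ∑ a, ∑ b', ∑ c, ∑ d, R (b (.inl a)) (b (.inl b')) (b (.inl c)) (b (.inl d)) * P a c * P b' d
        + 2 * ∑ b', ∑ c, ∑ d,
          R (b (.inr ())) (b (.inl b')) (b (.inl c)) (b (.inl d)) * n c * P b' d := by
  have hquad : ∑ a, ∑ c, ∑ p, ∑ q,
        P a p * P c q * R (b (.inl p)) (b (.inl q)) (b (.inl a)) (b (.inl c))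
      = ∑ a, ∑ b', ∑ c, ∑ d,
        R (b (.inl a)) (b (.inl b')) (b (.inl c)) (b (.inl d)) * P a c * P b' d := by
    refine Finset.sum_congr rfl fun a _ => Finset.sum_congr rfl fun b' _ =>
      Finset.sum_congr rfl fun c _ => Finset.sum_congr rfl fun d _ => ?_
    rw [hR3]; ring
  have hcubic₁ : ∑ a, ∑ c, n c * ∑ p, P a p * R (b (.inl p)) (b (.inr ())) (b (.inl a)) (b (.inl c))
      = ∑ b', ∑ c, ∑ d, R (b (.inr ())) (b (.inl b')) (b (.inl c)) (b (.inl d)) * n c * P b' d := by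
    calc _ = ∑ d, ∑ c, ∑ b',
          R (b (.inr ())) (b (.inl b')) (b (.inl c)) (b (.inl d)) * n c * P b' d := by
          simp only [Finset.mul_sum]
          refine Finset.sum_congr rfl fun d _ => Finset.sum_congr rfl fun c _ =>
            Finset.sum_congr rfl fun b' _ => ?_
          rw [hR1, hR2, neg_neg, hP]; ring
      _ = _ := by rw [Finset.sum_comm_cycle]; exact Finset.sum_congr rfl fun _ _ => Finset.sum_comm
  have hcubic₂ : ∑ a, ∑ c, n a * ∑ q, P c q * R (b (.inr ())) (b (.inl q)) (b (.inl a)) (b (.inl c))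
      = ∑ b', ∑ c, ∑ d, R (b (.inr ())) (b (.inl b')) (b (.inl c)) (b (.inl d)) * n c * P b' d := by
    calc _ = ∑ c, ∑ d, ∑ b',
          R (b (.inr ())) (b (.inl b')) (b (.inl c)) (b (.inl d)) * n c * P b' d := by
          simp only [Finset.mul_sum]
          refine Finset.sum_congr rfl fun c _ => Finset.sum_congr rfl fun d _ =>
            Finset.sum_congr rfl fun b' _ => ?_
          rw [hP]; ring
      _ = _ := Finset.sum_comm_cycle
  simp only [dualVec_inl, apply_sum_add_smul b R hR1, Finset.sum_add_distrib, hquad, hcubic₁,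
    hcubic₂]
  ring

lemma sum_apply_dualVec_inl_inr (hP : ∀ a c, P a c = P c a)
    (hR1 : ∀ X Z T S : W, R X Z T S = -R Z X T S) (hR2 : ∀ X Z T S : W, R X Z T S = -R X Z S T)
    (c : Fin m) :
    ∑ d, R (dualVec b P n n2 (.inl d)) (dualVec b P n n2 (.inr ())) (b (.inl d)) (b (.inl c))
      = ∑ b', ∑ d,
          R (b (.inr ())) (b (.inl b')) (b (.inl c)) (b (.inl d)) * (n2 * P b' d - n b' * n d)
        + ∑ a, ∑ b', ∑ d,
          R (b (.inl a)) (b (.inl b')) (b (.inl c)) (b (.inl d)) * n a * P b' d := by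
  have hcubic : ∑ d, ∑ p, ∑ q, P d p * n q * R (b (.inl p)) (b (.inl q)) (b (.inl d)) (b (.inl c))
      = ∑ a, ∑ b', ∑ d, R (b (.inl a)) (b (.inl b')) (b (.inl c)) (b (.inl d)) * n a * P b' d := by
    calc _ = ∑ d, ∑ b', ∑ a,
          R (b (.inl a)) (b (.inl b')) (b (.inl c)) (b (.inl d)) * n a * P b' d := by
          refine Finset.sum_congr rfl fun d _ => Finset.sum_congr rfl fun b' _ =>
            Finset.sum_congr rfl fun a _ => ?_
          rw [hR1, hR2, neg_neg, hP]; ring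
      _ = _ := by rw [Finset.sum_comm_cycle]; exact Finset.sum_congr rfl fun _ _ => Finset.sum_comm
  have hquad₁ : ∑ d, n2 * ∑ p, P d p * R (b (.inl p)) (b (.inr ())) (b (.inl d)) (b (.inl c))
      = ∑ b', ∑ d, R (b (.inr ())) (b (.inl b')) (b (.inl c)) (b (.inl d)) * (n2 * P b' d) := by
    rw [Finset.sum_comm]
    simp only [Finset.mul_sum]
    refine Finset.sum_congr rfl fun b' _ => Finset.sum_congr rfl fun d _ => ?_
    rw [hR1, hR2, neg_neg, hP]; ring
  have hquad₂ : ∑ d, n d * ∑ q, n q * R (b (.inr ())) (b (.inl q)) (b (.inl d)) (b (.inl c))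
      = -∑ b', ∑ d, R (b (.inr ())) (b (.inl b')) (b (.inl c)) (b (.inl d)) * (n b' * n d) := by
    rw [Finset.sum_comm]
    simp only [Finset.mul_sum, ← Finset.sum_neg_distrib]
    refine Finset.sum_congr rfl fun b' _ => Finset.sum_congr rfl fun d _ => ?_
    rw [hR2]; ring
  simp only [dualVec_inl, dualVec_inr, apply_sum_add_smul b R hR1, Finset.sum_add_distrib, hcubic,
    hquad₁, hquad₂, mul_sub, Finset.sum_sub_distrib]
  ring

end Curvature

theorem statement10_general (m : ℕ)
    (W : Type*) [AddCommGroup W] [Module ℝ W]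
    (g : LinearMap.BilinForm ℝ W)
    (hsymm : ∀ v w : W, g v w = g w v)
    (hnd : ∀ v : W, (∀ w : W, g v w = 0) → v = 0)
    (R : W →ₗ[ℝ] W →ₗ[ℝ] W →ₗ[ℝ] W →ₗ[ℝ] ℝ)
    (hR1 : ∀ X Z T S : W, R X Z T S = -R Z X T S)
    (hR2 : ∀ X Z T S : W, R X Z T S = -R X Z S T)
    (hR3 : ∀ X Z T S : W, R X Z T S = R T S X Z)
    (b : Module.Basis (Fin m ⊕ Unit) ℝ W)
    (P : Fin m → Fin m → ℝ) (n : Fin m → ℝ) (n2 : ℝ)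
    (hinv : InvBlocks (fun a c => g (b (Sum.inl a)) (b (Sum.inl c)))
      (fun a => g (b (Sum.inr ())) (b (Sum.inl a)))
      (g (b (Sum.inr ())) (b (Sum.inr ()))) P n n2)
    (ν : W) (hν0 : ∀ a : Fin m, g ν (b (Sum.inl a)) = 0)
    (hν1 : g ν (b (Sum.inr ())) = 1) :
    -- (1)
    (Ein g b R P n n2 ν (b (Sum.inr ()))
      = -(∑ b', ∑ c, ∑ d,
          R (b (Sum.inr ())) (b (Sum.inl b')) (b (Sum.inl c)) (b (Sum.inl d))
            * n c * P b' d)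
        - (∑ a, ∑ b', ∑ c, ∑ d,
          R (b (Sum.inl a)) (b (Sum.inl b')) (b (Sum.inl c)) (b (Sum.inl d))
            * P a c * P b' d) / 2)
    -- (2)
    ∧ (∀ c : Fin m,
      Ein g b R P n n2 ν (b (Sum.inl c))
        = (∑ b', ∑ d,
            R (b (Sum.inr ())) (b (Sum.inl b')) (b (Sum.inl c)) (b (Sum.inl d))
              * (n2 * P b' d - n b' * n d))
          + (∑ a, ∑ b', ∑ d,
            R (b (Sum.inl a)) (b (Sum.inl b')) (b (Sum.inl c)) (b (Sum.inl d))
              * n a * P b' d)) := by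
  have hBA := ginv_mul_toMatrix b P n n2 hsymm hinv
  have hP := symm_of_ginv_mul_toMatrix_eq_one b P n n2 hsymm hBA
  have hν := eq_dualVec_inr b P n n2 hnd hBA hν0 hν1
  refine ⟨?_, fun c => ?_⟩
  · rw [ein_basis_inr_eq b R P n n2 hP hR1 hR2 hν hν1,
      sum_apply_dualVec_inl_inl b R P n n2 hP hR1 hR2 hR3]
    ring
  · rw [ein_basis_inl_eq b R P n n2 hP hR1 hν c (hν0 c), hν,
      sum_apply_dualVec_inl_inr b R P n n2 hP hR1 hR2 c]

/-- Proposition 4 of the paper, the normal-transversal and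
normal-tangential components of the Einstein tensor in terms of the Riemann
tensor and the inverse-Gram blocks `(P,n,n⁽²⁾)`. -/
theorem statement10 (m : ℕ) (hm : 1 ≤ m)
    (W : Type*) [AddCommGroup W] [Module ℝ W]
    (g : LinearMap.BilinForm ℝ W)
    (hsymm : ∀ v w : W, g v w = g w v)
    (hnd : ∀ v : W, (∀ w : W, g v w = 0) → v = 0)
    (R : W →ₗ[ℝ] W →ₗ[ℝ] W →ₗ[ℝ] W →ₗ[ℝ] ℝ)
    (hR1 : ∀ X Z T S : W, R X Z T S = -R Z X T S)
    (hR2 : ∀ X Z T S : W, R X Z T S = -R X Z S T)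
    (hR3 : ∀ X Z T S : W, R X Z T S = R T S X Z)
    (b : Module.Basis (Fin m ⊕ Unit) ℝ W)
    (P : Fin m → Fin m → ℝ) (n : Fin m → ℝ) (n2 : ℝ)
    (hinv : InvBlocks (fun a c => g (b (Sum.inl a)) (b (Sum.inl c)))
      (fun a => g (b (Sum.inr ())) (b (Sum.inl a)))
      (g (b (Sum.inr ())) (b (Sum.inr ()))) P n n2)
    (ν : W) (hν0 : ∀ a : Fin m, g ν (b (Sum.inl a)) = 0)
    (hν1 : g ν (b (Sum.inr ())) = 1) :
    -- (1)
    (Ein g b R P n n2 ν (b (Sum.inr ()))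
      = -(∑ b', ∑ c, ∑ d,
          R (b (Sum.inr ())) (b (Sum.inl b')) (b (Sum.inl c)) (b (Sum.inl d))
            * n c * P b' d)
        - (∑ a, ∑ b', ∑ c, ∑ d,
          R (b (Sum.inl a)) (b (Sum.inl b')) (b (Sum.inl c)) (b (Sum.inl d))
            * P a c * P b' d) / 2)
    -- (2)
    ∧ (∀ c : Fin m,
      Ein g b R P n n2 ν (b (Sum.inl c))
        = (∑ b', ∑ d,
            R (b (Sum.inr ())) (b (Sum.inl b')) (b (Sum.inl c)) (b (Sum.inl d))
              * (n2 * P b' d - n b' * n d))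
          + (∑ a, ∑ b', ∑ d,
            R (b (Sum.inl a)) (b (Sum.inl b')) (b (Sum.inl c)) (b (Sum.inl d))
              * n a * P b' d)) :=
  statement10_general m W g hsymm hnd R hR1 hR2 hR3 b P n n2 hinv ν hν0 hν1

end Statement10
end
end
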